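/- Assume u(x) = Q(y(x)) x where Q is an SO(n)-valued matrix field of class C¹ depending only on the 2-plane radial variables y = (y_1,…,y_N), and let X[u] = [∇u]ᵗ[∇u] − I_n, Y[u] = [∇u][∇u]ᵗ − I_n. Then: (i) X[u] = Σ_{ℓ=1}^N [Qᵗ∂_ℓQ x ⊗ ∇y_ℓ + ∇y_ℓ ⊗ Qᵗ∂_ℓQ x] + Σ_{ℓ=1}^N Σ_{k=1}^N ⟨∂_ℓQ x, ∂_kQ x⟩ ∇y_ℓ ⊗ ∇y_k; (ii) Y[u] = Σ_{ℓ=1}^N [Q∇y_ℓ ⊗ ∂_ℓQ x + ∂_ℓQ x ⊗ Q∇y_ℓ + ∂_ℓQ x ⊗ ∂_ℓQ x]; (iii) X[u]∇(|u|²) = 2[Σ_{ℓ=1}^N ⟨∇y_ℓ, x⟩ Qᵗ∂_ℓQ x + Σ_{ℓ=1}^N Σ_{k=1}^N ⟨∂_ℓQ x, ∂_kQ x⟩ ⟨∇y_k, x⟩ ∇y_ℓ]. -/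

import Mathlib

open scoped BigOperators
open Matrix

noncomputable section

/-- Partial derivative `∂g/∂x_j` of a scalar field on `ℝᵐ`. -/
def pdx {m : ℕ} (g : (Fin m → ℝ) → ℝ) (x : Fin m → ℝ) (j : Fin m) : ℝ :=
  fderiv ℝ g x (Pi.single j 1)

/-- Gradient of a scalar field on `ℝᵐ`. -/
def gradx {m : ℕ} (g : (Fin m → ℝ) → ℝ) (x : Fin m → ℝ) : Fin m → ℝ :=
  fun j => pdx g x j

/-- Gradient matrix `∇u`, with entries `(∇u)_{ij} = ∂u_i/∂x_j`. -/
def gradm {n : ℕ} (u : (Fin n → ℝ) → Fin n → ℝ) (x : Fin n → ℝ) :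
    Matrix (Fin n) (Fin n) ℝ :=
  Matrix.of fun i j => pdx (fun z => u z i) x j

/-- Laplacian of a scalar field. -/
def lapx {m : ℕ} (g : (Fin m → ℝ) → ℝ) (x : Fin m → ℝ) : ℝ :=
  ∑ j, pdx (fun z => pdx g z j) x j

/-- Hessian matrix of a scalar field. -/
def hessx {m : ℕ} (g : (Fin m → ℝ) → ℝ) (x : Fin m → ℝ) : Matrix (Fin m) (Fin m) ℝ :=
  Matrix.of fun i j => pdx (fun z => pdx g z j) x i

/-- Componentwise Laplacian of a vector field. -/
def lapv {n : ℕ} (u : (Fin n → ℝ) → Fin n → ℝ) (x : Fin n → ℝ) : Fin n → ℝ :=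
  fun i => lapx (fun z => u z i) x

/-- Squared Euclidean norm of a vector. -/
def norm2 {m : ℕ} (v : Fin m → ℝ) : ℝ := ∑ i, v i ^ 2

/-- Euclidean norm of a vector. -/
def enr {m : ℕ} (v : Fin m → ℝ) : ℝ := Real.sqrt (norm2 v)

/-- Squared Frobenius norm of a matrix, `|E|² = tr (EᵗE)`. -/
def frob2 {n : ℕ} (M : Matrix (Fin n) (Fin n) ℝ) : ℝ := ∑ i, ∑ j, M i j ^ 2

/-- The 2-plane radial variables `y = (y_1, …, y_N)`, `N = ⌈n/2⌉` (0-indexed):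
`y_ℓ = √(x_{2ℓ}² + x_{2ℓ+1}²)` and, when `n` is odd, `y_{N-1} = x_{n-1}`. -/
def yvar {n : ℕ} (x : Fin n → ℝ) (ℓ : Fin ((n+1)/2)) : ℝ :=
  if h : 2 * (ℓ : ℕ) + 1 < n then
    Real.sqrt (x ⟨2*(ℓ:ℕ), by omega⟩ ^ 2 + x ⟨2*(ℓ:ℕ)+1, h⟩ ^ 2)
  else x ⟨n - 1, by have := ℓ.isLt; omega⟩

/-- The vector of 2-plane radial variables of `x`. -/
def yv {n : ℕ} (x : Fin n → ℝ) : Fin ((n+1)/2) → ℝ := fun ℓ => yvar x ℓ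

/-- Inclusion `Fin (n/2) → Fin ((n+1)/2)`, i.e. `d = ⌊n/2⌋` into `N = ⌈n/2⌉`. -/
def dIdx {n : ℕ} (i : Fin (n/2)) : Fin ((n+1)/2) := ⟨(i:ℕ), by have := i.isLt; omega⟩

/-- Partial derivative `∂_ℓ M` of a matrix field on `ℝᴺ`. -/
def pdM {n N : ℕ} (M : (Fin N → ℝ) → Matrix (Fin n) (Fin n) ℝ)
    (y : Fin N → ℝ) (ℓ : Fin N) : Matrix (Fin n) (Fin n) ℝ :=
  Matrix.of fun i j => pdx (fun z => M z i j) y ℓ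

/-- Second partial derivative `∂²_{ℓk} M` of a matrix field on `ℝᴺ`. -/
def pdM2 {n N : ℕ} (M : (Fin N → ℝ) → Matrix (Fin n) (Fin n) ℝ)
    (y : Fin N → ℝ) (ℓ k : Fin N) : Matrix (Fin n) (Fin n) ℝ :=
  Matrix.of fun i j => pdx (fun z => pdM M z ℓ i j) y k

/-- The block diagonal `SO(n)`-valued matrix field `Q[f]`, with `2×2` rotation blocks
`R[f_ℓ(y)]` (and an extra diagonal `1` when `n` is odd). -/
def Qf {n : ℕ} (f : (Fin ((n+1)/2) → ℝ) → Fin (n/2) → ℝ)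
    (y : Fin ((n+1)/2) → ℝ) : Matrix (Fin n) (Fin n) ℝ :=
  Matrix.of fun i j =>
    if h : (i:ℕ)/2 = (j:ℕ)/2 ∧ (i:ℕ)/2 < n/2 then
      (if (i:ℕ) % 2 = 0 then
        (if (j:ℕ) % 2 = 0 then Real.cos (f y ⟨(i:ℕ)/2, h.2⟩)
         else -Real.sin (f y ⟨(i:ℕ)/2, h.2⟩))
       else
        (if (j:ℕ) % 2 = 0 then Real.sin (f y ⟨(i:ℕ)/2, h.2⟩)
         else Real.cos (f y ⟨(i:ℕ)/2, h.2⟩)))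
    else (if i = j then 1 else 0)

/-- The block diagonal rotation matrix `exp(α𝐇) = diag(R[α], …, R[α])`
(an extra diagonal `1` when `n` is odd). -/
def rotM (n : ℕ) (α : ℝ) : Matrix (Fin n) (Fin n) ℝ :=
  Matrix.of fun i j =>
    if (i:ℕ)/2 = (j:ℕ)/2 ∧ (i:ℕ)/2 < n/2 then
      (if (i:ℕ) % 2 = 0 then
        (if (j:ℕ) % 2 = 0 then Real.cos α else -Real.sin α)
       else
        (if (j:ℕ) % 2 = 0 then Real.sin α else Real.cos α))
    else (if i = j then 1 else 0)

/-- The vector `w^k = (0, …, 0, x_{2k}, x_{2k+1}, 0, …, 0)`. -/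
def wv {n : ℕ} (x : Fin n → ℝ) (k : Fin ((n+1)/2)) : Fin n → ℝ :=
  fun j => if (j:ℕ)/2 = (k:ℕ) then x j else 0

/-- The vector `[w^k]^⊥ = (0, …, 0, -x_{2k+1}, x_{2k}, 0, …, 0)` (zero in the odd last slot). -/
def wperp {n : ℕ} (x : Fin n → ℝ) (k : Fin ((n+1)/2)) : Fin n → ℝ :=
  fun j =>
    if h : (j:ℕ)/2 = (k:ℕ) ∧ 2*(k:ℕ)+1 < n then
      (if (j:ℕ) % 2 = 0 then -x ⟨2*(k:ℕ)+1, h.2⟩ else x ⟨2*(k:ℕ), by omega⟩)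
    else 0

/-- The differential operator
`𝓛[u;A,B] = [∇u]ᵗ[∇u]∇A + A [∇u]ᵗΔu + B [∇u]ᵗu`, where `A, B` are evaluated at
`(|x|, |u|², |∇u|²)` and `∇A` is the spatial gradient of `x ↦ A(|x|,|u(x)|²,|∇u(x)|²)`. -/
def LAB {n : ℕ} (A B : ℝ → ℝ → ℝ → ℝ) (u : (Fin n → ℝ) → Fin n → ℝ)
    (x : Fin n → ℝ) : Fin n → ℝ :=
  ((gradm u x)ᵀ * gradm u x) *ᵥ
      gradx (fun z => A (enr z) (norm2 (u z)) (frob2 (gradm u z))) x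
    + A (enr x) (norm2 (u x)) (frob2 (gradm u x)) • ((gradm u x)ᵀ *ᵥ lapv u x)
    + B (enr x) (norm2 (u x)) (frob2 (gradm u x)) • ((gradm u x)ᵀ *ᵥ u x)

/-- The annulus `𝕏ₙ = {x : a < |x| < b}` in `ℝⁿ`. -/
def Xann (n : ℕ) (a b : ℝ) : Set (Fin n → ℝ) := {x | a < enr x ∧ enr x < b}

/-- The region `𝔸ₙ = {y : a < ‖y‖ < b}` (with the 2-plane radial coordinates positive). -/
def Ann (n : ℕ) (a b : ℝ) : Set (Fin ((n+1)/2) → ℝ) :=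
  {y | a < enr y ∧ enr y < b ∧ ∀ ℓ : Fin ((n+1)/2), 2*(ℓ:ℕ)+1 < n → 0 < y ℓ}

/-- `𝒥(y) = y_1 ⋯ y_d`. -/
def Jac (n : ℕ) (y : Fin ((n+1)/2) → ℝ) : ℝ :=
  ∏ ℓ : Fin ((n+1)/2), if 2*(ℓ:ℕ)+1 < n then y ℓ else 1

/-- The argument `ξ = n + Σ_j y_j² |∇f_j|²`. -/
def xiArg (n : ℕ) (f : (Fin ((n+1)/2) → ℝ) → Fin (n/2) → ℝ)
    (y : Fin ((n+1)/2) → ℝ) : ℝ :=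
  (n : ℝ) + ∑ j : Fin (n/2), (y (dIdx j))^2 * norm2 (gradx (fun z => f z j) y)

/-- The coefficients `𝒜_i(y,∇f) = y_i² A(z, z², n + Σ_j y_j²|∇f_j|²) 𝒥(y)`, `z = ‖y‖`. -/
def coefA (n : ℕ) (A : ℝ → ℝ → ℝ → ℝ) (f : (Fin ((n+1)/2) → ℝ) → Fin (n/2) → ℝ)
    (i : Fin (n/2)) (y : Fin ((n+1)/2) → ℝ) : ℝ :=
  (y (dIdx i))^2 * A (enr y) ((enr y)^2) (xiArg n f y) * Jac n y

/-- `div [𝒜_i(y,∇f) ∇f_i]`, divergence taken in the `y` variables. -/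
def divA (n : ℕ) (A : ℝ → ℝ → ℝ → ℝ) (f : (Fin ((n+1)/2) → ℝ) → Fin (n/2) → ℝ)
    (i : Fin (n/2)) (y : Fin ((n+1)/2) → ℝ) : ℝ :=
  ∑ k, pdx (fun z => coefA n A f i z * pdx (fun w => f w i) z k) y k

/-- The curl of a vector field, `[curl U]_{ij} = ∂_j U_i − ∂_i U_j`. -/
def curlm {n : ℕ} (U : (Fin n → ℝ) → Fin n → ℝ) (x : Fin n → ℝ) :
    Matrix (Fin n) (Fin n) ℝ :=
  Matrix.of fun i j => pdx (fun z => U z i) x j - pdx (fun z => U z j) x i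

end

/-!
By the chain rule `∇u = Q + Σ_ℓ ∂_ℓQ x ⊗ ∇y_ℓ`, a sum of rank-one perturbations of the
orthogonal matrix `Q`; expanding `[∇u]ᵗ[∇u]` and `[∇u][∇u]ᵗ` gives (i) and (ii). For (ii) one also
needs the gradients `∇y_ℓ` to be orthonormal: they are unit vectors supported on disjoint pairs of
coordinates. For (iii), `|u| = |x|` gives `∇(|u|²) = 2x`, and `⟨Qᵗ∂_ℓQ x, x⟩ = 0` because
differentiating `QᵗQ = I` shows that `Qᵗ∂_ℓQ` is skew-symmetric.
-/

section PartialDerivatives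

variable {m : ℕ} {f g : (Fin m → ℝ) → ℝ} {x : Fin m → ℝ}

theorem HasFDerivAt.pdx_eq {L : (Fin m → ℝ) →L[ℝ] ℝ} (h : HasFDerivAt f L x) (j : Fin m) :
    pdx f x j = L (Pi.single j 1) := by
  rw [pdx, h.fderiv]

theorem pdx_const (c : ℝ) (x : Fin m → ℝ) (j : Fin m) : pdx (fun _ => c) x j = 0 := by
  simp [pdx]

theorem pdx_apply (x : Fin m → ℝ) (i j : Fin m) :
    pdx (fun z => z i) x j = (Pi.single j 1 : Fin m → ℝ) i :=
  (hasFDerivAt_apply i x).pdx_eq j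

theorem pdx_add (hf : DifferentiableAt ℝ f x) (hg : DifferentiableAt ℝ g x) (j : Fin m) :
    pdx (fun z => f z + g z) x j = pdx f x j + pdx g x j :=
  (hf.hasFDerivAt.add hg.hasFDerivAt).pdx_eq j

theorem pdx_mul (hf : DifferentiableAt ℝ f x) (hg : DifferentiableAt ℝ g x) (j : Fin m) :
    pdx (fun z => f z * g z) x j = pdx f x j * g x + f x * pdx g x j := by
  rw [(hf.hasFDerivAt.fun_mul hg.hasFDerivAt).pdx_eq j, pdx, pdx]
  simp only [_root_.add_apply, _root_.smul_apply, smul_eq_mul]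
  ring

theorem pdx_sum {ι : Type*} (s : Finset ι) {F : ι → (Fin m → ℝ) → ℝ}
    (hF : ∀ i ∈ s, DifferentiableAt ℝ (F i) x) (j : Fin m) :
    pdx (fun z => ∑ i ∈ s, F i z) x j = ∑ i ∈ s, pdx (F i) x j := by
  rw [(HasFDerivAt.fun_sum fun i hi => (hF i hi).hasFDerivAt).pdx_eq j]
  simp [pdx]

theorem pdx_comp_of_hasDerivAt {φ : ℝ → ℝ} {φ' : ℝ} (hφ : HasDerivAt φ φ' (f x))
    (hf : DifferentiableAt ℝ f x) (j : Fin m) :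
    pdx (fun z => φ (f z)) x j = φ' * pdx f x j := by
  have hc : HasFDerivAt (fun z => φ (f z)) (φ' • fderiv ℝ f x) x :=
    hφ.comp_hasFDerivAt x hf.hasFDerivAt
  rw [hc.pdx_eq j, pdx]
  simp

theorem pdx_sq_apply (x : Fin m → ℝ) (i j : Fin m) :
    pdx (fun z => z i ^ 2) x j = 2 * x i * (Pi.single j 1 : Fin m → ℝ) i := by
  rw [pdx_comp_of_hasDerivAt (φ := fun t => t ^ 2) (f := fun z => z i)
    (hasDerivAt_pow 2 (x i)) (differentiableAt_apply i x), pdx_apply]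
  ring

theorem pdx_comp {N : ℕ} {h : (Fin N → ℝ) → ℝ} {Y : (Fin m → ℝ) → Fin N → ℝ}
    (hh : DifferentiableAt ℝ h (Y x)) (hY : DifferentiableAt ℝ Y x) (j : Fin m) :
    pdx (fun z => h (Y z)) x j = ∑ ℓ, pdx h (Y x) ℓ * pdx (fun z => Y z ℓ) x j := by
  have hc : HasFDerivAt (fun z => h (Y z)) ((fderiv ℝ h (Y x)).comp (fderiv ℝ Y x)) x :=
    hh.hasFDerivAt.comp x hY.hasFDerivAt
  rw [hc.pdx_eq j, ContinuousLinearMap.comp_apply]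
  conv_lhs => rw [← Finset.univ_sum_single (fderiv ℝ Y x (Pi.single j 1))]
  rw [map_sum]
  refine Finset.sum_congr rfl fun ℓ _ => ?_
  rw [pdx, pdx, fderiv_apply hY, mul_comm, ← smul_eq_mul, ← map_smul, ← Pi.single_smul',
    smul_eq_mul, mul_one]
  rfl

end PartialDerivatives

section RadialVariables

variable {n : ℕ} {ℓ : Fin ((n+1)/2)} {x : Fin n → ℝ}

theorem yvar_eq_sqrt (h : 2 * (ℓ : ℕ) + 1 < n) :
    (fun z : Fin n → ℝ => yvar z ℓ)
      = fun z => √(z ⟨2 * ℓ, by omega⟩ ^ 2 + z ⟨2 * ℓ + 1, h⟩ ^ 2) := by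
  funext z
  simp [yvar, h]

theorem yvar_eq_apply (h : ¬ 2 * (ℓ : ℕ) + 1 < n) :
    (fun z : Fin n → ℝ => yvar z ℓ) = fun z => z ⟨n - 1, by have := ℓ.isLt; omega⟩ := by
  funext z
  simp [yvar, h]

theorem differentiableAt_yvar (hx : 2 * (ℓ : ℕ) + 1 < n → 0 < yvar x ℓ) :
    DifferentiableAt ℝ (fun z => yvar z ℓ) x := by
  by_cases h : 2 * (ℓ : ℕ) + 1 < n
  · have hpos := congrFun (yvar_eq_sqrt h) x ▸ hx h
    rw [yvar_eq_sqrt h]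
    exact DifferentiableAt.sqrt (by fun_prop) (Real.sqrt_pos.mp hpos).ne'
  · rw [yvar_eq_apply h]
    fun_prop

theorem differentiableAt_yv (hx : ∀ ℓ : Fin ((n+1)/2), 2 * (ℓ : ℕ) + 1 < n → 0 < yvar x ℓ) :
    DifferentiableAt ℝ yv x :=
  differentiableAt_pi.2 fun ℓ => differentiableAt_yvar (hx ℓ)

theorem pdx_yvar (hx : 2 * (ℓ : ℕ) + 1 < n → 0 < yvar x ℓ) (j : Fin n) :
    pdx (fun z => yvar z ℓ) x j
      = if (j : ℕ) / 2 = ℓ then (if 2 * (ℓ : ℕ) + 1 < n then x j / yvar x ℓ else 1) else 0 := by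
  by_cases h : 2 * (ℓ : ℕ) + 1 < n
  · set a : Fin n := ⟨2 * ℓ, by omega⟩
    set b : Fin n := ⟨2 * ℓ + 1, h⟩
    have hy : yvar x ℓ = √(x a ^ 2 + x b ^ 2) := congrFun (yvar_eq_sqrt h) x
    have hs : 0 < x a ^ 2 + x b ^ 2 := Real.sqrt_pos.mp (hy ▸ hx h)
    rw [yvar_eq_sqrt h, pdx_comp_of_hasDerivAt (Real.hasDerivAt_sqrt hs.ne') (by fun_prop),
      pdx_add (by fun_prop) (by fun_prop), pdx_sq_apply, pdx_sq_apply, if_pos h, ← hy]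
    rcases (by omega : (j : ℕ) = 2 * ℓ ∨ (j : ℕ) = 2 * ℓ + 1 ∨ (j : ℕ) / 2 ≠ ℓ)
      with hj | hj | hj
    · obtain rfl : j = a := Fin.ext hj
      simp [a, Fin.ext_iff]
      field_simp
    · obtain rfl : j = b := Fin.ext hj
      simp [b, Fin.ext_iff, show (2 * (ℓ : ℕ) + 1) / 2 = ℓ by omega]
      field_simp
    · simp [Fin.ext_iff, hj, show 2 * (ℓ : ℕ) ≠ j by omega,
        show 2 * (ℓ : ℕ) + 1 ≠ j by omega]
  · rw [yvar_eq_apply h, pdx_apply, if_neg h, Pi.single_apply]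
    have := ℓ.isLt
    have := j.isLt
    congr 1
    simp only [Fin.ext_iff, eq_iff_iff]
    omega

theorem gradx_yvar_dotProduct_self (hx : 2 * (ℓ : ℕ) + 1 < n → 0 < yvar x ℓ) :
    gradx (fun z => yvar z ℓ) x ⬝ᵥ gradx (fun z => yvar z ℓ) x = 1 := by
  simp only [dotProduct, gradx, pdx_yvar hx]
  by_cases h : 2 * (ℓ : ℕ) + 1 < n
  · set a : Fin n := ⟨2 * ℓ, by omega⟩
    set b : Fin n := ⟨2 * ℓ + 1, h⟩
    have hy : yvar x ℓ = √(x a ^ 2 + x b ^ 2) := congrFun (yvar_eq_sqrt h) x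
    have hs : 0 < x a ^ 2 + x b ^ 2 := Real.sqrt_pos.mp (hy ▸ hx h)
    rw [Finset.sum_eq_add a b (by simp [a, b, Fin.ext_iff]) ?_ (by simp) (by simp)]
    · simp only [a, b, h, if_true, show 2 * (ℓ : ℕ) / 2 = ℓ by omega,
        show (2 * (ℓ : ℕ) + 1) / 2 = ℓ by omega]
      rw [div_mul_div_comm, div_mul_div_comm, ← add_div, ← sq, ← sq, ← sq, hy,
        Real.sq_sqrt hs.le, div_self hs.ne']
    · intro j _ hj
      have hj' : (j : ℕ) ≠ 2 * ℓ ∧ (j : ℕ) ≠ 2 * ℓ + 1 :=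
        ⟨fun e => hj.1 (Fin.ext e), fun e => hj.2 (Fin.ext e)⟩
      simp [show ¬ (j : ℕ) / 2 = ℓ by omega]
  · have := ℓ.isLt
    rw [Finset.sum_eq_single ⟨n - 1, by omega⟩]
    · simp [h, show (n - 1) / 2 = (ℓ : ℕ) by omega]
    · intro j _ hj
      have hj' : (j : ℕ) ≠ n - 1 := fun e => hj (Fin.ext e)
      simp [show ¬ (j : ℕ) / 2 = ℓ by omega]
    · simp

theorem gradx_yvar_dotProduct (hx : ∀ ℓ : Fin ((n+1)/2), 2 * (ℓ : ℕ) + 1 < n → 0 < yvar x ℓ)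
    (ℓ k : Fin ((n+1)/2)) :
    gradx (fun z => yvar z ℓ) x ⬝ᵥ gradx (fun z => yvar z k) x = if ℓ = k then 1 else 0 := by
  split_ifs with hℓk
  · subst hℓk
    exact gradx_yvar_dotProduct_self (hx ℓ)
  · refine Finset.sum_eq_zero fun j _ => ?_
    have hk : (k : ℕ) ≠ ℓ := fun h => hℓk (Fin.ext h.symm)
    simp only [gradx, pdx_yvar (hx _)]
    split_ifs <;> first | omega | ring

end RadialVariables

theorem gradm_mulVec_comp {n N : ℕ} {M : (Fin N → ℝ) → Matrix (Fin n) (Fin n) ℝ}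
    {Y : (Fin n → ℝ) → Fin N → ℝ} {x : Fin n → ℝ}
    (hM : ∀ i k, DifferentiableAt ℝ (fun y => M y i k) (Y x)) (hY : DifferentiableAt ℝ Y x) :
    gradm (fun z => M (Y z) *ᵥ z) x
      = M (Y x) + ∑ ℓ, vecMulVec (pdM M (Y x) ℓ *ᵥ x) (gradx (fun z => Y z ℓ) x) := by
  ext i j
  have hMY : ∀ k, DifferentiableAt ℝ (fun z => M (Y z) i k) x := fun k => (hM i k).comp x hY
  simp only [gradm, of_apply, mulVec, dotProduct]
  rw [pdx_sum _ fun k _ => (hMY k).fun_mul (differentiableAt_apply k x)]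
  simp only [pdx_mul (hMY _) (differentiableAt_apply _ x), pdx_apply, pdx_comp (hM i _) hY]
  rw [Finset.sum_add_distrib, add_comm, Matrix.add_apply]
  congr 1
  · simp [Pi.single_apply]
  · simp only [Matrix.sum_apply, vecMulVec_apply, mulVec, dotProduct, pdM, of_apply, gradx,
      Finset.sum_mul]
    rw [Finset.sum_comm]
    exact Finset.sum_congr rfl fun ℓ _ => Finset.sum_congr rfl fun k _ => by ring

theorem transpose_mul_pdM_eq_neg {n N : ℕ} {M : (Fin N → ℝ) → Matrix (Fin n) (Fin n) ℝ}
    (hM : ∀ y, (M y)ᵀ * M y = 1) {y : Fin N → ℝ}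
    (hd : ∀ i j, DifferentiableAt ℝ (fun y => M y i j) y) (ℓ : Fin N) :
    ((M y)ᵀ * pdM M y ℓ)ᵀ = -((M y)ᵀ * pdM M y ℓ) := by
  ext i j
  have hconst : (fun y => ∑ m, M y m i * M y m j)
      = fun _ => (1 : Matrix (Fin n) (Fin n) ℝ) i j := by
    funext y'
    rw [← hM y']
    simp [Matrix.mul_apply]
  have h0 := congrArg (fun f => pdx f y ℓ) hconst
  simp only [pdx_const, pdx_sum _ fun m _ => (hd m i).fun_mul (hd m j),
    pdx_mul (hd _ i) (hd _ j)] at h0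
  rw [neg_apply, eq_neg_iff_add_eq_zero, ← h0]
  simp only [transpose_apply, mul_apply, pdM, of_apply, ← Finset.sum_add_distrib]
  exact Finset.sum_congr rfl fun m _ => by ring

theorem dotProduct_mulVec_self_eq_zero {R m : Type*} [CommRing R] [IsAddTorsionFree R]
    [Fintype m] {A : Matrix m m R} (hA : Aᵀ = -A) (v : m → R) : (A *ᵥ v) ⬝ᵥ v = 0 := by
  refine self_eq_neg.mp ?_
  calc (A *ᵥ v) ⬝ᵥ v = (Aᵀ *ᵥ v) ⬝ᵥ v := by
        rw [dotProduct_comm, dotProduct_mulVec, mulVec_transpose]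
    _ = -((A *ᵥ v) ⬝ᵥ v) := by rw [hA, neg_mulVec, neg_dotProduct]

theorem norm2_eq_dotProduct {m : ℕ} (v : Fin m → ℝ) : norm2 v = v ⬝ᵥ v := by
  simp [norm2, dotProduct, sq]

theorem norm2_mulVec_of_transpose_mul_self {m : ℕ} {P : Matrix (Fin m) (Fin m) ℝ}
    (hP : Pᵀ * P = 1) (v : Fin m → ℝ) : norm2 (P *ᵥ v) = norm2 v := by
  rw [norm2_eq_dotProduct, norm2_eq_dotProduct, dotProduct_mulVec, ← mulVec_transpose,
    mulVec_mulVec, hP, one_mulVec]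

theorem gradx_norm2 {m : ℕ} (x : Fin m → ℝ) : gradx norm2 x = (2 : ℝ) • x := by
  funext j
  show pdx (fun z => ∑ i, z i ^ 2) x j = _
  rw [pdx_sum _ fun i _ => by fun_prop]
  simp [pdx_sq_apply, Pi.single_apply]

section RankOneUpdate

variable {R m ι : Type*} [CommRing R] [Fintype m] [DecidableEq m] [Fintype ι]
  (P : Matrix m m R) (a g : ι → m → R)

theorem transpose_mul_self_add_sum_vecMulVec_sub_one (hP : Pᵀ * P = 1) :
    (P + ∑ ℓ, vecMulVec (a ℓ) (g ℓ))ᵀ * (P + ∑ ℓ, vecMulVec (a ℓ) (g ℓ)) - 1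
      = ∑ ℓ, (vecMulVec (Pᵀ *ᵥ a ℓ) (g ℓ) + vecMulVec (g ℓ) (Pᵀ *ᵥ a ℓ))
        + ∑ ℓ, ∑ k, (a ℓ ⬝ᵥ a k) • vecMulVec (g ℓ) (g k) := by
  set S := ∑ ℓ, vecMulVec (a ℓ) (g ℓ)
  have hSt : Sᵀ = ∑ ℓ, vecMulVec (g ℓ) (a ℓ) := by
    simp only [S, transpose_sum, transpose_vecMulVec]
  have hPS : Pᵀ * S = ∑ ℓ, vecMulVec (Pᵀ *ᵥ a ℓ) (g ℓ) := by
    simp only [S, Matrix.mul_sum, mul_vecMulVec]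
  have hSP : Sᵀ * P = ∑ ℓ, vecMulVec (g ℓ) (Pᵀ *ᵥ a ℓ) := by
    simp only [hSt, Matrix.sum_mul, vecMulVec_mul, mulVec_transpose]
  have hSS : Sᵀ * S = ∑ ℓ, ∑ k, (a ℓ ⬝ᵥ a k) • vecMulVec (g ℓ) (g k) := by
    rw [hSt, Matrix.sum_mul]
    simp only [S, Matrix.mul_sum, vecMulVec_mul_vecMulVec, vecMulVec_smul]
  rw [transpose_add, Matrix.add_mul, Matrix.mul_add, Matrix.mul_add, hP, hPS, hSP, hSS,
    Finset.sum_add_distrib]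
  abel

theorem mul_transpose_self_add_sum_vecMulVec_sub_one [DecidableEq ι] (hP : P * Pᵀ = 1)
    (hg : ∀ ℓ k, g ℓ ⬝ᵥ g k = if ℓ = k then 1 else 0) :
    (P + ∑ ℓ, vecMulVec (a ℓ) (g ℓ)) * (P + ∑ ℓ, vecMulVec (a ℓ) (g ℓ))ᵀ - 1
      = ∑ ℓ, (vecMulVec (P *ᵥ g ℓ) (a ℓ) + vecMulVec (a ℓ) (P *ᵥ g ℓ)
          + vecMulVec (a ℓ) (a ℓ)) := by
  set S := ∑ ℓ, vecMulVec (a ℓ) (g ℓ)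
  have hSt : Sᵀ = ∑ ℓ, vecMulVec (g ℓ) (a ℓ) := by
    simp only [S, transpose_sum, transpose_vecMulVec]
  have hPS : P * Sᵀ = ∑ ℓ, vecMulVec (P *ᵥ g ℓ) (a ℓ) := by
    simp only [hSt, Matrix.mul_sum, mul_vecMulVec]
  have hSP : S * Pᵀ = ∑ ℓ, vecMulVec (a ℓ) (P *ᵥ g ℓ) := by
    simp only [S, Matrix.sum_mul, vecMulVec_mul, vecMul_transpose]
  have hSS : S * Sᵀ = ∑ ℓ, vecMulVec (a ℓ) (a ℓ) := by
    rw [Matrix.sum_mul]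
    simp only [hSt, Matrix.mul_sum, vecMulVec_mul_vecMulVec, vecMulVec_smul]
    simp only [hg, ite_smul, one_smul, zero_smul, Finset.sum_ite_eq, Finset.mem_univ, if_true]
  rw [transpose_add, Matrix.add_mul, Matrix.mul_add, Matrix.mul_add, hP, hPS, hSP, hSS,
    Finset.sum_add_distrib, Finset.sum_add_distrib]
  abel

end RankOneUpdate

theorem stmt4_general (n : ℕ)
    (Q : (Fin ((n+1)/2) → ℝ) → Matrix (Fin n) (Fin n) ℝ)
    (hQreg : ∀ i j, ContDiff ℝ 1 fun y => Q y i j)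
    (hQSO : ∀ y, (Q y)ᵀ * Q y = 1 ∧ (Q y).det = 1)
    (u : (Fin n → ℝ) → Fin n → ℝ)
    (hu : ∀ z, u z = Q (yv z) *ᵥ z)
    (x : Fin n → ℝ)
    (hx : ∀ ℓ : Fin ((n+1)/2), 2*(ℓ:ℕ)+1 < n → 0 < yvar x ℓ) :
    let y0 := yv x
    let gy : Fin ((n+1)/2) → Fin n → ℝ := fun ℓ => gradx (fun z => yvar z ℓ) x
    let X := (gradm u x)ᵀ * gradm u x - 1
    let Y := gradm u x * (gradm u x)ᵀ - 1
    -- (i)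
    (X = (∑ ℓ, (vecMulVec (((Q y0)ᵀ * pdM Q y0 ℓ) *ᵥ x) (gy ℓ)
            + vecMulVec (gy ℓ) (((Q y0)ᵀ * pdM Q y0 ℓ) *ᵥ x)))
        + ∑ ℓ, ∑ k, ((pdM Q y0 ℓ *ᵥ x) ⬝ᵥ (pdM Q y0 k *ᵥ x)) • vecMulVec (gy ℓ) (gy k)) ∧
    -- (ii)
    (Y = ∑ ℓ, (vecMulVec (Q y0 *ᵥ gy ℓ) (pdM Q y0 ℓ *ᵥ x)
            + vecMulVec (pdM Q y0 ℓ *ᵥ x) (Q y0 *ᵥ gy ℓ)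
            + vecMulVec (pdM Q y0 ℓ *ᵥ x) (pdM Q y0 ℓ *ᵥ x))) ∧
    -- (iii)
    (X *ᵥ gradx (fun z => norm2 (u z)) x
      = (2:ℝ) • ((∑ ℓ, (gy ℓ ⬝ᵥ x) • (((Q y0)ᵀ * pdM Q y0 ℓ) *ᵥ x))
          + ∑ ℓ, ∑ k, (((pdM Q y0 ℓ *ᵥ x) ⬝ᵥ (pdM Q y0 k *ᵥ x)) * (gy k ⬝ᵥ x)) • gy ℓ)) := by
  obtain rfl : u = fun z => Q (yv z) *ᵥ z := funext hu
  intro y0 gy X Y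
  have hQ : ∀ y, (Q y)ᵀ * Q y = 1 := fun y => (hQSO y).1
  have hdQ : ∀ i j, DifferentiableAt ℝ (fun y => Q y i j) y0 :=
    fun i j => ((hQreg i j).differentiable one_ne_zero).differentiableAt
  have hgrad : gradm (fun z => Q (yv z) *ᵥ z) x
      = Q y0 + ∑ ℓ, vecMulVec (pdM Q y0 ℓ *ᵥ x) (gy ℓ) :=
    gradm_mulVec_comp hdQ (differentiableAt_yv hx)
  have hX := transpose_mul_self_add_sum_vecMulVec_sub_one _ (fun ℓ => pdM Q y0 ℓ *ᵥ x) gy (hQ y0)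
  simp only [← hgrad, mulVec_mulVec] at hX
  refine ⟨hX, ?_, ?_⟩
  · simp only [Y, hgrad]
    exact mul_transpose_self_add_sum_vecMulVec_sub_one _ _ _
      (mul_eq_one_comm.mp (hQ y0)) (gradx_yvar_dotProduct hx)
  · have hskew : ∀ ℓ, (((Q y0)ᵀ * pdM Q y0 ℓ) *ᵥ x) ⬝ᵥ x = 0 := fun ℓ =>
      dotProduct_mulVec_self_eq_zero (transpose_mul_pdM_eq_neg hQ hdQ ℓ) x
    simp only [X, norm2_mulVec_of_transpose_mul_self (hQ _), gradx_norm2, mulVec_smul, hX,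
      add_mulVec, sum_mulVec, smul_mulVec, vecMulVec_mulVec, hskew, op_smul_eq_smul, smul_smul,
      zero_smul, add_zero]

/-- Lemma 3.7: identities for `X[u]`, `Y[u]` and `X[u]∇(|u|²)` for a map
`u(x) = Q(y(x)) x` with `Q` an `SO(n)`-valued `C¹` matrix field of the 2-plane radial
variables. -/
theorem stmt4 (n : ℕ) (hn : 2 ≤ n)
    (Q : (Fin ((n+1)/2) → ℝ) → Matrix (Fin n) (Fin n) ℝ)
    (hQreg : ∀ i j, ContDiff ℝ 1 fun y => Q y i j)
    (hQSO : ∀ y, (Q y)ᵀ * Q y = 1 ∧ (Q y).det = 1)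
    (u : (Fin n → ℝ) → Fin n → ℝ)
    (hu : ∀ z, u z = Q (yv z) *ᵥ z)
    (x : Fin n → ℝ)
    (hx : ∀ ℓ : Fin ((n+1)/2), 2*(ℓ:ℕ)+1 < n → 0 < yvar x ℓ) :
    let y0 := yv x
    let gy : Fin ((n+1)/2) → Fin n → ℝ := fun ℓ => gradx (fun z => yvar z ℓ) x
    let X := (gradm u x)ᵀ * gradm u x - 1
    let Y := gradm u x * (gradm u x)ᵀ - 1
    -- (i)
    (X = (∑ ℓ, (vecMulVec (((Q y0)ᵀ * pdM Q y0 ℓ) *ᵥ x) (gy ℓ)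
            + vecMulVec (gy ℓ) (((Q y0)ᵀ * pdM Q y0 ℓ) *ᵥ x)))
        + ∑ ℓ, ∑ k, ((pdM Q y0 ℓ *ᵥ x) ⬝ᵥ (pdM Q y0 k *ᵥ x)) • vecMulVec (gy ℓ) (gy k)) ∧
    -- (ii)
    (Y = ∑ ℓ, (vecMulVec (Q y0 *ᵥ gy ℓ) (pdM Q y0 ℓ *ᵥ x)
            + vecMulVec (pdM Q y0 ℓ *ᵥ x) (Q y0 *ᵥ gy ℓ)
            + vecMulVec (pdM Q y0 ℓ *ᵥ x) (pdM Q y0 ℓ *ᵥ x))) ∧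
    -- (iii)
    (X *ᵥ gradx (fun z => norm2 (u z)) x
      = (2:ℝ) • ((∑ ℓ, (gy ℓ ⬝ᵥ x) • (((Q y0)ᵀ * pdM Q y0 ℓ) *ᵥ x))
          + ∑ ℓ, ∑ k, (((pdM Q y0 ℓ *ᵥ x) ⬝ᵥ (pdM Q y0 k *ᵥ x)) * (gy k ⬝ᵥ x)) • gy ℓ)) :=
  stmt4_general n Q hQreg hQSO u hu x hx
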